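/- arXiv:2207.10428 — 3 statements merged into one kernel-verified Lean document; each statement's English description precedes it below -/
import Mathlib

section
/- Let Z, τ ∈ ℝ with τ ≠ 1 and τ ≠ −1, and let α₊, α₋, β₊, β₋ ∈ ℂ∖{0}. For ω ∈ {+,−} define the linear form D_ω(p) := α_ω p₁ + β_ω p₂ for p = (p₁,p₂) ∈ ℝ². Suppose 𝒟₊, 𝒟₋ : ℝ² → ℂ are linear maps such that for both ω = + and ω = − and all p ∈ ℝ²: 𝒟_ω(p) D_{−ω}(p) + τ 𝒟_{−ω}(p) D_ω(p) = Z(1−τ²) D_ω(p) D_{−ω}(p). Then 𝒟_ω = Z(1−τ) D_ω, i.e. 𝒟_ω((1,0)) = Z(1−τ)α_ω and 𝒟_ω((0,1)) = Z(1−τ)β_ω for ω = ±. -/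
/-- The linear-algebraic core of the proof that the stiffness of the height field
equals the dimer critical exponent: if the linear maps `𝒟_ω : ℝ² → ℂ` (`ω ∈ {+,-}`,
encoded by `Bool` with `-ω = !ω`) satisfy, for all momenta `p`,
`𝒟_ω(p) D_{-ω}(p) + τ 𝒟_{-ω}(p) D_ω(p) = Z(1-τ²) D_ω(p) D_{-ω}(p)` where
`D_ω(p) = α_ω p₁ + β_ω p₂`, then `𝒟_ω = Z(1-τ) D_ω`. -/
theorem ward_comparison_linear_system (Z τ : ℝ) (hτ1 : τ ≠ 1) (hτ2 : τ ≠ -1)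
    (α β : Bool → ℂ) (hα : ∀ ω, α ω ≠ 0) (hβ : ∀ ω, β ω ≠ 0)
    (𝒟 : Bool → (ℝ × ℝ) →ₗ[ℝ] ℂ)
    (h : ∀ (ω : Bool) (p : ℝ × ℝ),
      𝒟 ω p * (α (!ω) * (p.1 : ℂ) + β (!ω) * (p.2 : ℂ))
        + (τ : ℂ) * (𝒟 (!ω) p * (α ω * (p.1 : ℂ) + β ω * (p.2 : ℂ)))
      = (Z : ℂ) * (1 - (τ : ℂ)^2) *
          ((α ω * (p.1 : ℂ) + β ω * (p.2 : ℂ)) *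
            (α (!ω) * (p.1 : ℂ) + β (!ω) * (p.2 : ℂ)))) :
    ∀ (ω : Bool) (p : ℝ × ℝ),
      𝒟 ω p = (Z : ℂ) * (1 - (τ : ℂ)) * (α ω * (p.1 : ℂ) + β ω * (p.2 : ℂ)) := by
  have hτ1' : (1 : ℂ) - (τ : ℂ) ≠ 0 := by
    rw [sub_ne_zero]
    intro hh
    exact hτ1 (by exact_mod_cast hh.symm)
  have hτ2' : (1 : ℂ) + (τ : ℂ) ≠ 0 := by
    intro hh
    apply hτ2
    have : (τ : ℂ) = -1 := by linear_combination hh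
    exact_mod_cast this
  have hτsq : (1 : ℂ) - (τ : ℂ)^2 ≠ 0 := by
    intro hh
    rcases mul_eq_zero.mp (show ((1:ℂ) - τ) * (1 + τ) = 0 by linear_combination hh) with
      h' | h'
    · exact hτ1' h'
    · exact hτ2' h'
  -- abstract solver for the 2×2 system
  have key : ∀ (a : Bool → ℂ), (∀ ω, a ω ≠ 0) → ∀ (x : Bool → ℂ),
      (∀ ω, x ω * a (!ω) + (τ : ℂ) * (x (!ω) * a ω)
          = (Z : ℂ) * (1 - (τ : ℂ)^2) * (a ω * a (!ω))) →
      ∀ ω, x ω = (Z : ℂ) * (1 - (τ : ℂ)) * a ω := by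
    intro a ha x hx ω
    have h1 := hx ω
    have h2 := hx (!ω)
    rw [Bool.not_not] at h2
    have hfac : a (!ω) * ((1 : ℂ) - (τ : ℂ)^2) ≠ 0 := mul_ne_zero (ha _) hτsq
    have hmain : x ω * (a (!ω) * ((1 : ℂ) - (τ : ℂ)^2))
        = (Z : ℂ) * (1 - (τ : ℂ)) * a ω * (a (!ω) * ((1 : ℂ) - (τ : ℂ)^2)) := by
      linear_combination h1 - (τ : ℂ) * h2
    exact mul_right_cancel₀ hfac hmain
  have hA : ∀ ω, 𝒟 ω (1, 0) = (Z : ℂ) * (1 - (τ : ℂ)) * α ω := by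
    apply key α hα
    intro ω
    have := h ω (1, 0)
    push_cast at this
    linear_combination this
  have hB : ∀ ω, 𝒟 ω (0, 1) = (Z : ℂ) * (1 - (τ : ℂ)) * β ω := by
    apply key β hβ
    intro ω
    have := h ω (0, 1)
    push_cast at this
    linear_combination this
  intro ω p
  have hp : p = p.1 • ((1 : ℝ), (0 : ℝ)) + p.2 • ((0 : ℝ), (1 : ℝ)) := by
    simp [Prod.ext_iff]
  rw [hp, map_add, map_smul, map_smul, hA ω, hB ω]
  simp [Complex.real_smul]
  ring
end

section
/- Let n ≥ 2 and let M : ℝ² → Matrix(Fin n, Fin n, ℂ) be differentiable at p₀ ∈ ℝ², with det M(p₀) = 0 but with the derivative of the map k ↦ det M(k) at p₀ nonzero (i.e., p₀ is a simple zero of det∘M). Then the matrix M(p₀) has rank n−1, its adjugate adj M(p₀) is nonzero of rank 1, and there exist vectors U, V ∈ ℂⁿ such that adj M(p₀) = U ⊗ V, i.e. (adj M(p₀))_{i,j} = U_i V_j for all i, j. -/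
/-!
By Jacobi's formula, `d(det ∘ M)(p₀) = ∑ᵢⱼ adj(M p₀)ⱼᵢ · dMᵢⱼ(p₀)`, so a simple zero forces
`adj M(p₀) ≠ 0`. For a singular matrix `A` with `adj A ≠ 0`, some entry of `adj A` is a nonzero
`(n-1)`-minor of `A`, whence `rank A ≥ n - 1`; and `A * adj A = det A • 1 = 0` gives
`rank A + rank (adj A) ≤ n`. Hence `rank A = n - 1` and `rank (adj A) = 1`, and a matrix of rank
one is an outer product `U Vᵀ`.
-/

open Matrix

namespace Matrix

section CommRing

variable {ι R : Type*} [Fintype ι] [DecidableEq ι] [CommRing R]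

theorem det_updateRow_eq_sum_mul_adjugate (A : Matrix ι ι R) (i : ι) (r : ι → R) :
    (A.updateRow i r).det = ∑ j, r j * A.adjugate j i := by
  rw [← cramer_transpose_apply, cramer_eq_adjugate_mulVec, ← adjugate_transpose]
  simp [mulVec, dotProduct, mul_comm]

end CommRing

variable {K m n : Type*} [Field K]

theorem rank_eq_zero_iff [Fintype n] {B : Matrix m n K} : B.rank = 0 ↔ B = 0 := by
  have := Module.Finite.span_of_finite K (Set.finite_range B.col)
  rw [rank_eq_finrank_span_cols, Submodule.finrank_eq_zero, Submodule.span_eq_bot]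
  simp only [Set.forall_mem_range, funext_iff, col_apply, Pi.zero_apply, ← Matrix.ext_iff,
    zero_apply]
  exact forall_comm

theorem exists_eq_vecMulVec_of_rank_le_one [Fintype n] {B : Matrix m n K} (hB : B.rank ≤ 1) :
    ∃ (U : m → K) (V : n → K), B = vecMulVec U V := by
  rw [rank_eq_finrank_span_cols] at hB
  have := Module.Finite.span_of_finite K (Set.finite_range B.col)
  obtain ⟨U, hU⟩ := finrank_le_one_iff.mp hB
  choose V hV using fun j => hU ⟨B.col j, Submodule.subset_span ⟨j, rfl⟩⟩
  refine ⟨U, V, ext fun i j => ?_⟩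
  have hcol := congrFun (congrArg Subtype.val (hV j)) i
  simp only [Submodule.coe_smul, Pi.smul_apply, smul_eq_mul, col_apply] at hcol
  rw [vecMulVec_apply, ← hcol, mul_comm]

variable {ι : Type*} [Fintype ι] [DecidableEq ι] (A : Matrix ι ι K)

theorem card_sub_one_le_rank_of_adjugate_ne_zero (hA : A.adjugate ≠ 0) :
    Fintype.card ι - 1 ≤ A.rank := by
  obtain ⟨j, i, hji⟩ : ∃ j i, A.adjugate j i ≠ 0 := by
    by_contra! h
    exact hA (ext h)
  rw [adjugate_apply] at hji
  -- off row `i`, the invertible matrix `A.updateRow i (Pi.single j 1)` agrees with `A`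
  have hrows : LinearIndependent K (A.submatrix (Subtype.val : {k // k ≠ i} → ι) id).row := by
    have hsub : (A.submatrix (Subtype.val : {k // k ≠ i} → ι) id).row =
        (A.updateRow i (Pi.single j 1)).row ∘ Subtype.val :=
      funext fun k => (updateRow_ne (M := A) (b := Pi.single j 1) k.2).symm
    rw [hsub]
    exact (linearIndependent_rows_of_det_ne_zero hji).comp _ Subtype.val_injective
  calc Fintype.card ι - 1 = (A.submatrix Subtype.val id).rank := by
        rw [hrows.rank_matrix, Fintype.card_subtype_compl, Fintype.card_subtype_eq]
    _ ≤ A.rank := rank_submatrix_le A _ _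

theorem rank_add_rank_adjugate_le_card (hA : A.det = 0) :
    A.rank + A.adjugate.rank ≤ Fintype.card ι :=
  rank_add_rank_le_card_of_mul_eq_zero (by rw [mul_adjugate, hA, zero_smul])

theorem rank_eq_card_sub_one_of_det_eq_zero (hdet : A.det = 0) (hA : A.adjugate ≠ 0) :
    A.rank = Fintype.card ι - 1 := by
  have := rank_add_rank_adjugate_le_card A hdet
  have := card_sub_one_le_rank_of_adjugate_ne_zero A hA
  have := mt rank_eq_zero_iff.mp hA
  omega

theorem rank_adjugate_eq_one_of_det_eq_zero (hdet : A.det = 0) (hA : A.adjugate ≠ 0) :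
    A.adjugate.rank = 1 := by
  have := rank_add_rank_adjugate_le_card A hdet
  have := card_sub_one_le_rank_of_adjugate_ne_zero A hA
  have := mt rank_eq_zero_iff.mp hA
  omega

end Matrix

section Jacobi

variable {𝕜 𝔸 E ι : Type*} [NontriviallyNormedField 𝕜] [NormedCommRing 𝔸] [NormedAlgebra 𝕜 𝔸]
  [NormedAddCommGroup E] [NormedSpace 𝕜 E] [Fintype ι] [DecidableEq ι]

variable (𝕜 𝔸 ι) in
noncomputable def Matrix.detRowContinuousMultilinear :
    ContinuousMultilinearMap 𝕜 (fun _ : ι => ι → 𝔸) 𝔸 where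
  toMultilinearMap := (detRowAlternating : (ι → 𝔸) [⋀^ι]→ₗ[𝔸] 𝔸).toMultilinearMap.restrictScalars 𝕜
  cont := continuous_id.matrix_det

theorem HasFDerivAt.matrix_det {M : E → Matrix ι ι 𝔸} {M' : ι → ι → E →L[𝕜] 𝔸} {p : E}
    (hM : ∀ i j, HasFDerivAt (fun k => M k i j) (M' i j) p) :
    HasFDerivAt (fun k => (M k).det) (∑ i, ∑ j, (M p).adjugate j i • M' i j) p := by
  have hrows : ∀ i, HasFDerivAt (fun k => M k i) (ContinuousLinearMap.pi (M' i)) p :=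
    fun i => hasFDerivAt_pi.2 (hM i)
  refine (HasFDerivAt.multilinear_comp (detRowContinuousMultilinear 𝕜 𝔸 ι) hrows).congr_fderiv ?_
  refine Finset.sum_congr rfl fun i _ => ?_
  ext x
  simp only [ContinuousLinearMap.comp_apply, ContinuousLinearMap.coe_pi',
    ContinuousMultilinearMap.toContinuousLinearMap_apply, _root_.sum_apply,
    _root_.smul_apply, smul_eq_mul]
  exact ((M p).det_updateRow_eq_sum_mul_adjugate i _).trans (by simp only [mul_comm])

theorem adjugate_ne_zero_of_fderiv_det_ne_zero {M : E → Matrix ι ι 𝔸} {p : E}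
    (hM : ∀ i j, DifferentiableAt 𝕜 (fun k => M k i j) p)
    (hdet : fderiv 𝕜 (fun k => (M k).det) p ≠ 0) : (M p).adjugate ≠ 0 := by
  intro hadj
  apply hdet
  rw [(HasFDerivAt.matrix_det fun i j => (hM i j).hasFDerivAt).fderiv]
  refine Finset.sum_eq_zero fun i _ => Finset.sum_eq_zero fun j _ => ?_
  rw [hadj, Matrix.zero_apply]
  exact zero_smul 𝔸 (fderiv 𝕜 (fun k => M k i j) p)

end Jacobi

theorem adjugate_rank_one_at_simple_zero_general (n : ℕ)
    (M : ℝ × ℝ → Matrix (Fin n) (Fin n) ℂ) (p₀ : ℝ × ℝ)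
    (hdiff : ∀ i j, DifferentiableAt ℝ (fun k => M k i j) p₀)
    (h0 : (M p₀).det = 0)
    (h1 : fderiv ℝ (fun k => (M k).det) p₀ ≠ 0) :
    (M p₀).rank = n - 1 ∧
    (M p₀).adjugate ≠ 0 ∧
    (M p₀).adjugate.rank = 1 ∧
    ∃ U V : Fin n → ℂ, ∀ i j, (M p₀).adjugate i j = U i * V j := by
  have hadj := adjugate_ne_zero_of_fderiv_det_ne_zero hdiff h1
  have hrank := rank_adjugate_eq_one_of_det_eq_zero _ h0 hadj
  obtain ⟨U, V, hUV⟩ := exists_eq_vecMulVec_of_rank_le_one hrank.le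
  refine ⟨?_, hadj, hrank, U, V, fun i j => by rw [hUV, vecMulVec_apply]⟩
  simpa using rank_eq_card_sub_one_of_det_eq_zero (M p₀) h0 hadj

/-- At a simple zero `p₀` of `det ∘ M` (i.e. `det M(p₀) = 0` but the derivative of
`k ↦ det M(k)` at `p₀` is nonzero), the matrix `M(p₀)` has rank `n-1`, its adjugate is
a nonzero matrix of rank one, and the adjugate factorizes as a Kronecker product
`adj M(p₀) = U ⊗ V` of two vectors. -/
theorem adjugate_rank_one_at_simple_zero (n : ℕ) (hn : 2 ≤ n)
    (M : ℝ × ℝ → Matrix (Fin n) (Fin n) ℂ) (p₀ : ℝ × ℝ)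
    (hdiff : ∀ i j, DifferentiableAt ℝ (fun k => M k i j) p₀)
    (h0 : (M p₀).det = 0)
    (h1 : fderiv ℝ (fun k => (M k).det) p₀ ≠ 0) :
    (M p₀).rank = n - 1 ∧
    (M p₀).adjugate ≠ 0 ∧
    (M p₀).adjugate.rank = 1 ∧
    ∃ U V : Fin n → ℂ, ∀ i j, (M p₀).adjugate i j = U i * V j :=
  adjugate_rank_one_at_simple_zero_general n M p₀ hdiff h0 h1
end

section
/- Let a, b, c, d ∈ ℂ be such that the closed segments [a,b] and [c,d] are disjoint. Then the iterated complex line integral ∫_{[a,b]} (∫_{[c,d]} (z−w)^{−2} dw) dz is well defined, and Re[ ∫_{[a,b]} ∫_{[c,d]} (z−w)^{−2} dw dz ] = log( |b−d| · |a−c| ) − log( |a−d| · |b−c| ). -/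
/-!
In `w`, the kernel `(z - w)⁻²` has the primitive `(z - w)⁻¹`, so the inner integral equals
`(z - d)⁻¹ - (z - c)⁻¹`. The function `(z - w)⁻¹` has no single-valued primitive in `z`, but its
real part along any path is the derivative of `log |z - w|`, which is single-valued. Hence the real
part of the outer integral is `(log |b - d| - log |a - d|) - (log |b - c| - log |a - c|)`.
-/

open scoped Real

/-- the complex line integral of `f` along the straight segment from `p` to `q` -/
noncomputable def segIntegral (f : ℂ → ℂ) (p q : ℂ) : ℂ :=
  ∫ t in (0:ℝ)..1, f (p + (t : ℂ) * (q - p)) * (q - p)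

open Set intervalIntegral
open scoped RealInnerProductSpace

theorem HasDerivAt.log_norm {F : Type*} [NormedAddCommGroup F] [InnerProductSpace ℝ F]
    {f : ℝ → F} {f' : F} {t : ℝ} (hf : HasDerivAt f f' t) (ht : f t ≠ 0) :
    HasDerivAt (fun s => Real.log ‖f s‖) (⟪f t, f'⟫ / ‖f t‖ ^ 2) t := by
  have h := (hf.norm_sq.log (pow_ne_zero 2 (norm_ne_zero_iff.mpr ht))).div_const 2
  have heq : (fun s => Real.log ‖f s‖) = fun s => Real.log (‖f s‖ ^ 2) / 2 := by
    funext s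
    rw [Real.log_pow]
    push_cast
    ring
  rw [heq]
  exact h.congr_deriv (by ring)

theorem Complex.re_div_eq_inner_div_sq_norm (z w : ℂ) : (z / w).re = ⟪w, z⟫ / ‖w‖ ^ 2 := by
  rw [Complex.inner, Complex.div_re, ← Complex.normSq_eq_norm_sq, Complex.mul_re,
    Complex.conj_re, Complex.conj_im]
  ring

theorem continuousOn_inv_sub {𝕜 : Type*} [NormedDivisionRing 𝕜] {s : Set 𝕜} {w : 𝕜}
    (hw : w ∉ s) : ContinuousOn (fun z => (z - w)⁻¹) s :=
  (continuousOn_id.sub continuousOn_const).inv₀ fun _ hz =>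
    sub_ne_zero.mpr (ne_of_mem_of_not_mem hz hw)

section SegmentIntegral

variable {p q : ℂ}

theorem add_ofReal_mul_sub_mem_segment {t : ℝ} (ht : t ∈ Icc (0:ℝ) 1) :
    p + (t : ℂ) * (q - p) ∈ segment ℝ p q := by
  rw [segment_eq_image']
  exact ⟨t, ht, by simp [Complex.real_smul]⟩

theorem hasDerivAt_add_ofReal_mul_sub (t : ℝ) :
    HasDerivAt (fun s : ℝ => p + (s : ℂ) * (q - p)) (q - p) t := by
  simpa using ((hasDerivAt_id t).ofReal_comp.mul_const (q - p)).const_add p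

theorem ContinuousOn.segIntegrand {f : ℂ → ℂ} (hf : ContinuousOn f (segment ℝ p q)) :
    ContinuousOn (fun t : ℝ => f (p + (t : ℂ) * (q - p)) * (q - p)) (uIcc 0 1) := by
  rw [uIcc_of_le zero_le_one]
  exact (hf.comp (by fun_prop) fun _ => add_ofReal_mul_sub_mem_segment).mul continuousOn_const

theorem segIntegral_congr {f g : ℂ → ℂ} (h : EqOn f g (segment ℝ p q)) :
    segIntegral f p q = segIntegral g p q := by
  refine integral_congr fun t ht => ?_
  rw [uIcc_of_le zero_le_one] at ht
  simp only [h (add_ofReal_mul_sub_mem_segment ht)]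

theorem segIntegral_sub {f g : ℂ → ℂ} (hf : ContinuousOn f (segment ℝ p q))
    (hg : ContinuousOn g (segment ℝ p q)) :
    segIntegral (fun z => f z - g z) p q = segIntegral f p q - segIntegral g p q := by
  simp only [segIntegral, sub_mul]
  exact integral_sub hf.segIntegrand.intervalIntegrable hg.segIntegrand.intervalIntegrable

theorem segIntegral_eq_sub_of_hasDerivAt {F f : ℂ → ℂ}
    (hF : ∀ z ∈ segment ℝ p q, HasDerivAt F (f z) z) (hf : ContinuousOn f (segment ℝ p q)) :
    segIntegral f p q = F q - F p := by
  have hderiv : ∀ t ∈ uIcc (0:ℝ) 1, HasDerivAt (fun s : ℝ => F (p + (s : ℂ) * (q - p)))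
      (f (p + (t : ℂ) * (q - p)) * (q - p)) t := by
    intro t ht
    rw [uIcc_of_le zero_le_one] at ht
    exact (hF _ (add_ofReal_mul_sub_mem_segment ht)).comp t (hasDerivAt_add_ofReal_mul_sub t)
  rw [segIntegral, integral_eq_sub_of_hasDerivAt hderiv hf.segIntegrand.intervalIntegrable]
  norm_num

theorem re_segIntegral_inv_sub {w : ℂ} (hw : w ∉ segment ℝ p q) :
    (segIntegral (fun z => (z - w)⁻¹) p q).re = Real.log ‖q - w‖ - Real.log ‖p - w‖ := by
  have hcont := (continuousOn_inv_sub hw).segIntegrand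
  have hderiv : ∀ t ∈ uIcc (0:ℝ) 1,
      HasDerivAt (fun s : ℝ => Real.log ‖p + (s : ℂ) * (q - p) - w‖)
        ((p + (t : ℂ) * (q - p) - w)⁻¹ * (q - p)).re t := by
    intro t ht
    rw [uIcc_of_le zero_le_one] at ht
    have hne : p + (t : ℂ) * (q - p) - w ≠ 0 :=
      sub_ne_zero.mpr (ne_of_mem_of_not_mem (add_ofReal_mul_sub_mem_segment ht) hw)
    rw [inv_mul_eq_div, Complex.re_div_eq_inner_div_sq_norm]
    exact ((hasDerivAt_add_ofReal_mul_sub t).sub_const w).log_norm hne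
  rw [segIntegral, ← Complex.reCLM_apply,
    ← ContinuousLinearMap.intervalIntegral_comp_comm _ hcont.intervalIntegrable]
  simp only [Complex.reCLM_apply]
  rw [integral_eq_sub_of_hasDerivAt hderiv
    (Complex.continuous_re.comp_continuousOn hcont).intervalIntegrable]
  norm_num

end SegmentIntegral

theorem segIntegral_inv_sub_sq {z c d : ℂ} (hz : z ∉ segment ℝ c d) :
    segIntegral (fun w => ((z - w) ^ 2)⁻¹) c d = (z - d)⁻¹ - (z - c)⁻¹ := by
  have hne : ∀ w ∈ segment ℝ c d, z - w ≠ 0 := fun w hw =>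
    sub_ne_zero.mpr (ne_of_mem_of_not_mem hw hz).symm
  have hcont : ContinuousOn (fun w => ((z - w) ^ 2)⁻¹) (segment ℝ c d) :=
    ContinuousOn.inv₀ (by fun_prop) fun w hw => pow_ne_zero 2 (hne w hw)
  refine segIntegral_eq_sub_of_hasDerivAt (F := fun w => (z - w)⁻¹) (fun w hw => ?_) hcont
  exact (((hasDerivAt_id w).const_sub z).inv (hne w hw)).congr_deriv (by simp)

/-- Cross-ratio formula: if the segments `[a,b]` and `[c,d]` are disjoint, then
`Re ∫_{[a,b]} ∫_{[c,d]} (z-w)⁻² dw dz = log(|b-d|·|a-c|) - log(|a-d|·|b-c|)`. -/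
theorem re_double_segment_integral_cross_ratio (a b c d : ℂ)
    (hdisj : Disjoint (segment ℝ a b) (segment ℝ c d)) :
    (segIntegral (fun z => segIntegral (fun w => ((z - w)^2)⁻¹) c d) a b).re
      = Real.log (‖b - d‖ * ‖a - c‖)
        - Real.log (‖a - d‖ * ‖b - c‖) := by
  have hinner : EqOn (fun z => segIntegral (fun w => ((z - w) ^ 2)⁻¹) c d)
      (fun z => (z - d)⁻¹ - (z - c)⁻¹) (segment ℝ a b) :=
    fun _ hz => segIntegral_inv_sub_sq (disjoint_left.mp hdisj hz)
  have ha := left_mem_segment ℝ a b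
  have hb := right_mem_segment ℝ a b
  have hc := left_mem_segment ℝ c d
  have hd := right_mem_segment ℝ c d
  have hc_not : c ∉ segment ℝ a b := disjoint_right.mp hdisj hc
  have hd_not : d ∉ segment ℝ a b := disjoint_right.mp hdisj hd
  have hne : ∀ x ∈ segment ℝ a b, ∀ w ∈ segment ℝ c d, ‖x - w‖ ≠ 0 := fun _ hx _ hw =>
    norm_ne_zero_iff.mpr (sub_ne_zero.mpr (hdisj.ne_of_mem hx hw))
  rw [segIntegral_congr hinner,
    segIntegral_sub (continuousOn_inv_sub hd_not) (continuousOn_inv_sub hc_not), Complex.sub_re,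
    re_segIntegral_inv_sub hd_not, re_segIntegral_inv_sub hc_not,
    Real.log_mul (hne b hb d hd) (hne a ha c hc), Real.log_mul (hne a ha d hd) (hne b hb c hc)]
  ring
end
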